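/- The differential Wronskian Wr((x - ã_1)e^{λ_1 x}, ..., (x - ã_N)e^{λ_N x}), where ã_i = a_i + Σ_{s≠i} 1/(λ_i - λ_s), equals e^{(Σλ_i)x} ∏_{i<j}(λ_j - λ_i) times the characteristic polynomial det(x·I - Z) of the matrix Z with diagonal entries a_i and off-diagonal entries 1/(λ_j - λ_i); in particular, the zeroes of this Wronskian are exactly the eigenvalues of Z. -/

import Mathlib

/-!
Row `i` of the Wronskian matrix is `e^{λ_i x}` times `(x - ã_i) λ_i^j + j λ_i^{j-1}`. The second
summand is `(D V)_{ij}`, where `V` is the Vandermonde matrix and `D_{ik} = ℓ_k'(λ_i)` is the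
differentiation matrix of Lagrange interpolation at the nodes `λ`, exact on polynomials of degree
`< N`. Hence the Wronskian is `e^{(Σλ)x} det V det (diag (x - ã) + D)`. Conjugating `D` by the
diagonal matrix of nodal weights gives the matrix with diagonal `Σ_{s≠i} 1/(λ_i - λ_s)` and
off-diagonal entries `1/(λ_i - λ_k)`, so `diag (x - ã) + D` is similar to `x - Z`.
-/

open Matrix Finset Polynomial

namespace Lagrange

variable {F : Type*} [Field F] {ι : Type*} [DecidableEq ι]
variable {s : Finset ι} {v : ι → F} {i k : ι}

theorem nodalWeight_eq_nodalWeight_erase_mul (hk : k ∈ s) (hik : i ≠ k) :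
    nodalWeight s v i = nodalWeight (s.erase k) v i * (v i - v k)⁻¹ := by
  rw [nodalWeight, nodalWeight, erase_right_comm,
    ← mul_prod_erase (s.erase i) _ (mem_erase.2 ⟨hik.symm, hk⟩), mul_comm]

theorem derivative_basis (hk : k ∈ s) :
    derivative (Lagrange.basis s v k)
      = C (nodalWeight s v k) * derivative (nodal (s.erase k) v) := by
  rw [basis_eq_prod_sub_inv_mul_nodal_div hk, ← nodal_erase_eq_nodal_div hk, derivative_C_mul]

theorem eval_derivative_basis_self (hvs : Set.InjOn v s) (hk : k ∈ s) :
    (derivative (Lagrange.basis s v k)).eval (v k) = ∑ j ∈ s.erase k, (v k - v j)⁻¹ := by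
  rw [derivative_basis hk, eval_mul, eval_C, derivative_nodal, eval_finsetSum, mul_sum]
  refine sum_congr rfl fun j hj => ?_
  obtain ⟨hjk, hj⟩ := mem_erase.1 hj
  have hw := nodalWeight_ne_zero (hvs.mono (coe_subset.2 (erase_subset j s)))
    (mem_erase.2 ⟨hjk.symm, hk⟩)
  rw [erase_right_comm, ← inv_inv (eval _ (nodal _ _)), ← nodalWeight_eq_eval_nodal_erase_inv,
    nodalWeight_eq_nodalWeight_erase_mul hj hjk.symm]
  field_simp

theorem nodalWeight_mul_eval_derivative_basis (hvs : Set.InjOn v s) (hi : i ∈ s) (hk : k ∈ s)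
    (hik : i ≠ k) :
    nodalWeight s v i * (derivative (Lagrange.basis s v k)).eval (v i)
      = nodalWeight s v k / (v i - v k) := by
  have hw := nodalWeight_ne_zero (hvs.mono (coe_subset.2 (erase_subset k s)))
    (mem_erase.2 ⟨hik, hi⟩)
  rw [derivative_basis hk, eval_mul, eval_C, ← inv_inv (eval _ (derivative _)),
    ← nodalWeight_eq_eval_derivative_nodal (mem_erase.2 ⟨hik, hi⟩),
    nodalWeight_eq_nodalWeight_erase_mul hk hik]
  field_simp

theorem sum_eval_mul_eval_derivative_basis (hvs : Set.InjOn v s) {p : F[X]} (hp : p.degree < #s)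
    (x : F) :
    ∑ k ∈ s, p.eval (v k) * (derivative (Lagrange.basis s v k)).eval x
      = (derivative p).eval x := by
  conv_rhs => rw [eq_interpolate hvs hp]
  simp [interpolate_apply, eval_finsetSum]

variable [Fintype ι]

noncomputable def differentiationMatrix (v : ι → F) : Matrix ι ι F :=
  of fun i k => (derivative (Lagrange.basis univ v k)).eval (v i)

theorem differentiationMatrix_mul_vandermonde {N : ℕ} {v : Fin N → F}
    (hv : Function.Injective v) :
    differentiationMatrix v * vandermonde v
      = of fun i (j : Fin N) => ((j : ℕ) : F) * v i ^ ((j : ℕ) - 1) := by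
  ext i j
  have hdeg : (X ^ (j : ℕ) : F[X]).degree < #(univ : Finset (Fin N)) := by simp
  simpa [mul_apply, differentiationMatrix, mul_comm, derivative_X_pow] using
    sum_eval_mul_eval_derivative_basis hv.injOn hdeg (v i)

theorem diagonal_nodalWeight_mul_differentiationMatrix (hv : Function.Injective v) :
    diagonal (nodalWeight univ v) * differentiationMatrix v
      = (of fun i k => if i = k then ∑ j ∈ univ.erase i, (v i - v j)⁻¹ else (v i - v k)⁻¹)
          * diagonal (nodalWeight univ v) := by
  ext i k
  rw [diagonal_mul, mul_diagonal, of_apply, differentiationMatrix, of_apply]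
  split_ifs with hik
  · subst hik
    rw [eval_derivative_basis_self hv.injOn (mem_univ i), mul_comm]
  · rw [nodalWeight_mul_eval_derivative_basis hv.injOn (mem_univ i) (mem_univ k) hik,
      div_eq_inv_mul]

end Lagrange

open Lagrange

theorem iteratedDeriv_sub_mul_exp (c μ : ℂ) (n : ℕ) :
    iteratedDeriv n (fun t => (t - c) * Complex.exp (μ * t))
      = fun t => (μ ^ n * (t - c) + n * μ ^ (n - 1)) * Complex.exp (μ * t) := by
  induction n with
  | zero => simp
  | succ n ih =>
    rw [iteratedDeriv_succ, ih]
    funext t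
    have hexp : HasDerivAt (fun t => Complex.exp (μ * t)) (Complex.exp (μ * t) * μ) t := by
      simpa using ((hasDerivAt_id t).const_mul μ).cexp
    have hpoly : HasDerivAt (fun t => μ ^ n * (t - c) + n * μ ^ (n - 1)) (μ ^ n) t := by
      simpa using
        (((hasDerivAt_id t).sub_const c).const_mul (μ ^ n)).add_const ((n : ℂ) * μ ^ (n - 1))
    have hprod : HasDerivAt (fun t => (μ ^ n * (t - c) + n * μ ^ (n - 1)) * Complex.exp (μ * t))
        (μ ^ n * Complex.exp (μ * t)
          + (μ ^ n * (t - c) + n * μ ^ (n - 1)) * (Complex.exp (μ * t) * μ)) t :=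
      hpoly.mul hexp
    rw [hprod.deriv]
    rcases n with _ | n
    · simp only [pow_zero, one_mul, CharP.cast_eq_zero, zero_tsub, mul_one, add_zero, zero_add,
        pow_one, Nat.cast_one, tsub_self]
      ring
    · push_cast
      ring

theorem wronskian_sub_mul_exp_eq {N : ℕ} (lam : Fin N → ℂ) (hlam : Function.Injective lam)
    (c : Fin N → ℂ) (x : ℂ) :
    (fun i j : Fin N => iteratedDeriv (j : ℕ) (fun t => (t - c i) * Complex.exp (lam i * t)) x)
      = of fun i j => Complex.exp (lam i * x)
          * ((diagonal (fun i => x - c i) + differentiationMatrix lam) * vandermonde lam) i j := by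
  ext i j
  rw [iteratedDeriv_sub_mul_exp, add_mul, differentiationMatrix_mul_vandermonde hlam]
  simp only [Matrix.add_apply, diagonal_mul, vandermonde_apply, of_apply]
  ring

theorem det_wronskian_sub_mul_exp {N : ℕ} (lam : Fin N → ℂ) (hlam : Function.Injective lam)
    (c : Fin N → ℂ) (x : ℂ) :
    Matrix.det (fun i j : Fin N =>
        iteratedDeriv (j : ℕ) (fun t => (t - c i) * Complex.exp (lam i * t)) x)
      = Complex.exp ((∑ i, lam i) * x) * (vandermonde lam).det
          * (diagonal (fun i => x - c i) + differentiationMatrix lam).det := by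
  rw [wronskian_sub_mul_exp_eq lam hlam, det_mul_column, det_mul, ← Complex.exp_sum, sum_mul]
  ring

theorem det_diagonal_sub_add_differentiationMatrix {N : ℕ} (lam : Fin N → ℂ)
    (hlam : Function.Injective lam) (a atil : Fin N → ℂ)
    (hatil : ∀ i, atil i = a i + ∑ s ∈ univ.erase i, 1 / (lam i - lam s))
    (Z : Matrix (Fin N) (Fin N) ℂ)
    (hZ : ∀ i j, Z i j = if i = j then a i else 1 / (lam j - lam i)) (x : ℂ) :
    (diagonal (fun i => x - atil i) + differentiationMatrix lam).det = (charpoly Z).eval x := by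
  have hZ' : diagonal (fun i => x - atil i)
      + of (fun i k =>
          if i = k then ∑ j ∈ univ.erase i, (lam i - lam j)⁻¹ else (lam i - lam k)⁻¹)
      = scalar (Fin N) x - Z := by
    ext i k
    by_cases hik : i = k
    · subst hik
      simp only [Matrix.add_apply, Matrix.sub_apply, scalar_apply, diagonal_apply_eq, of_apply,
        if_true, hZ i i, hatil i, one_div]
      ring
    · simp only [Matrix.add_apply, Matrix.sub_apply, scalar_apply, diagonal_apply_ne _ hik,
        of_apply, if_neg hik, hZ i k, one_div, ← neg_sub (lam k) (lam i), inv_neg]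
      ring
  have hconj : diagonal (nodalWeight univ lam) * (diagonal (fun i => x - atil i)
      + differentiationMatrix lam) = (scalar (Fin N) x - Z) * diagonal (nodalWeight univ lam) := by
    rw [mul_add, diagonal_nodalWeight_mul_differentiationMatrix hlam, ← hZ', add_mul]
    simp only [diagonal_mul_diagonal, mul_comm]
  have hw : (∏ i, nodalWeight univ lam i) ≠ 0 :=
    prod_ne_zero_iff.2 fun i _ => nodalWeight_ne_zero hlam.injOn (mem_univ i)
  have hdet := congrArg det hconj
  rw [det_mul, det_mul, det_diagonal, mul_comm (det _)] at hdet
  rw [eval_charpoly]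
  exact mul_left_cancel₀ hw hdet

/-- The Wronskian of `(x - ã i) e^{λ i x}`, with `ã i = a i + Σ_{s≠i} 1/(λ i - λ s)`,
equals `e^{(Σ λ) x} ∏_{i<j} (λ j - λ i)` times the characteristic polynomial of
the matrix `Z` (diagonal `a i`, off-diagonal `1/(λ j - λ i)`) evaluated at `x`;
in particular the zeroes of this Wronskian are exactly the eigenvalues of `Z`. -/
theorem stmt_15 (N : ℕ) (lam : Fin N → ℂ) (hlam : Function.Injective lam)
    (a : Fin N → ℂ) (atil : Fin N → ℂ)
    (hatil : ∀ i, atil i = a i + ∑ s ∈ univ.erase i, 1 / (lam i - lam s))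
    (Z : Matrix (Fin N) (Fin N) ℂ)
    (hZ : ∀ i j, Z i j = if i = j then a i else 1 / (lam j - lam i)) :
    (∀ x : ℂ,
      Matrix.det (fun i j : Fin N =>
          iteratedDeriv (j : ℕ) (fun t => (t - atil i) * Complex.exp (lam i * t)) x)
        = Complex.exp ((∑ i, lam i) * x) *
            (∏ i, ∏ j ∈ univ.filter (fun j => i < j), (lam j - lam i)) *
            (Matrix.charpoly Z).eval x) ∧
    (∀ x : ℂ,
      Matrix.det (fun i j : Fin N =>
          iteratedDeriv (j : ℕ) (fun t => (t - atil i) * Complex.exp (lam i * t)) x) = 0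
        ↔ (Matrix.charpoly Z).IsRoot x) := by
  have hdet : ∀ x : ℂ, Matrix.det (fun i j : Fin N =>
      iteratedDeriv (j : ℕ) (fun t => (t - atil i) * Complex.exp (lam i * t)) x)
        = Complex.exp ((∑ i, lam i) * x) * (vandermonde lam).det * (charpoly Z).eval x := by
    intro x
    rw [det_wronskian_sub_mul_exp lam hlam,
      det_diagonal_sub_add_differentiationMatrix lam hlam a atil hatil Z hZ]
  refine ⟨fun x => ?_, fun x => ?_⟩
  · simp only [hdet, det_vandermonde, filter_lt_eq_Ioi]
  · simp [hdet, Complex.exp_ne_zero, det_vandermonde_ne_zero_iff.2 hlam, IsRoot]
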